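/- arXiv:1412.3001 — 4 statements merged into one kernel-verified Lean document; each statement's English description precedes it below -/
import Mathlib

section
/- Let D be a finite set with |D| = n ≥ 1 and let m ≥ 1. Enumerate the elements of the symmetric group Sym(D) as g_1, …, g_{n!}, and for each r let k_{r1}, …, k_{rℓ_r} be the cycle type of g_r. Then the number of m-endomorphisms on the free semigroup D⁺, up to combinatorial equivalence, equals (1/n!) · Σ_{r=1}^{n!} ∏_{i=1}^{ℓ_r} ( Σ_{k=1}^{m} ( Σ_{j | k_{ri}} j·c(g_r, j) )^k ). -/
/-!
Combinatorial equivalence classes of `m`-endomorphisms are the orbits of `Sym(D)` acting by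
conjugation with the automorphisms `map g`, so by Burnside's lemma their number is the average
number of endomorphisms fixed by a permutation `g`. An `m`-endomorphism is the same as its
restriction `f : D → W` to the generators, `W` being the words of length at most `m`, and it is
fixed by `g` iff `f (g d) = map g (f d)`. Such an `f` is freely determined by its values at one
point of each cycle of `g`; at a point on a cycle of length `k` the value can be any word fixed
by `map (g ^ k)`, i.e. any word of length at most `m` in the `∑_{j ∣ k} j c(g, j)` fixed points
of `g ^ k`.
-/

/-- The cycle type of a permutation of a finite set, *including* fixed points as
cycles of length `1` (so the entries sum to the cardinality of the set). -/
def fullCycleType {D : Type*} [Fintype D] [DecidableEq D] (g : Equiv.Perm D) : Multiset ℕ :=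
  g.cycleType + Multiset.replicate (Fintype.card D - g.support.card) 1

/-- The number of cycles of length `j` in the cycle decomposition of `g`
(fixed points counted as cycles of length `1`). -/
def cycleCount {D : Type*} [Fintype D] [DecidableEq D] (g : Equiv.Perm D) (j : ℕ) : ℕ :=
  Multiset.count j (fullCycleType g)

open Function Subgroup MulAction Finset Equiv

namespace MulAction

variable {G α β : Type*} [Group G] [MulAction G α] [MulAction G β] {g : G}

theorem map_zpow_smul {f : α → β} (hf : ∀ a, f (g • a) = g • f a) (i : ℤ) (a : α) :
    f (g ^ i • a) = g ^ i • f a := by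
  induction i using Int.induction_on generalizing a with
  | zero => simp
  | succ i ih => rw [zpow_add_one, mul_smul, mul_smul, ih, hf]
  | pred i ih =>
    rw [zpow_sub_one, mul_smul, mul_smul, ih, eq_inv_smul_iff.mpr (hf (g⁻¹ • a)).symm,
      smul_inv_smul]

theorem zpow_smul_congr {r : α} {b : β} (hb : g ^ period g r • b = b) {i j : ℤ}
    (h : g ^ i • r = g ^ j • r) : g ^ i • b = g ^ j • b := by
  have hr : g ^ (i - j) • r = r := by
    rw [sub_eq_neg_add, zpow_add, mul_smul, h, zpow_neg, inv_smul_smul]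
  have hdvd : (period g b : ℤ) ∣ i - j :=
    (Int.natCast_dvd_natCast.mpr (pow_smul_eq_iff_period_dvd.mp hb)).trans
      (zpow_smul_eq_iff_period_dvd.mp hr)
  rw [← add_sub_cancel j i, zpow_add, mul_smul, zpow_smul_eq_iff_period_dvd.mpr hdvd]

theorem exists_zpow_smul_out_eq (x : α) :
    ∃ i : ℤ, g ^ i • (Quotient.mk'' x : orbitRel.Quotient (zpowers g) α).out = x := by
  have := Quotient.mk_out' (s₁ := orbitRel (zpowers g) α) x
  rw [orbitRel_apply, mem_orbit_symm] at this
  obtain ⟨⟨_, i, rfl⟩, hi⟩ := this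
  exact ⟨i, hi⟩

variable (g) in
noncomputable def orbitExponent (x : α) : ℤ := (exists_zpow_smul_out_eq (g := g) x).choose

theorem zpow_orbitExponent_smul_out (x : α) :
    g ^ orbitExponent g x • (Quotient.mk'' x : orbitRel.Quotient (zpowers g) α).out = x :=
  (exists_zpow_smul_out_eq x).choose_spec

theorem period_zpow_smul (g : G) (i : ℤ) (a : α) : period g (g ^ i • a) = period g a := by
  have key : ∀ n : ℕ, g ^ n • g ^ i • a = g ^ i • a ↔ g ^ n • a = a := fun n => by
    rw [← zpow_natCast, smul_smul, ← zpow_add, add_comm, zpow_add, mul_smul, smul_left_cancel_iff]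
  exact Nat.dvd_antisymm (pow_smul_eq_iff_period_dvd.mp ((key _).mpr (pow_period_smul g a)))
    (pow_smul_eq_iff_period_dvd.mp ((key _).mp (pow_period_smul g _)))

theorem card_orbit_zpowers [Finite α] (g : G) (a : α) :
    Nat.card (orbit (zpowers g) a) = period g a := by
  have := Fintype.ofFinite (orbit (zpowers g) a)
  rw [period_eq_minimalPeriod, minimalPeriod_eq_card, Nat.card_eq_fintype_card]

variable (g) in
noncomputable def equivariantEquivPi :
    {f : α → β // ∀ a, f (g • a) = g • f a} ≃
      ∀ ω : orbitRel.Quotient (zpowers g) α, {b : β // g ^ period g ω.out • b = b} where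
  toFun f ω := ⟨f.1 ω.out, by
    rw [← zpow_natCast, ← map_zpow_smul f.2, zpow_natCast, pow_period_smul]⟩
  invFun v := ⟨fun a => g ^ orbitExponent g a • (v (Quotient.mk'' a)).1, fun a => by
    have hq : (Quotient.mk'' (g • a) : orbitRel.Quotient (zpowers g) α) = Quotient.mk'' a :=
      Quotient.sound' ⟨⟨g, mem_zpowers g⟩, rfl⟩
    -- both `orbitExponent g (g • a)` and `1 + orbitExponent g a` move the representative to `g • a`
    have hga := zpow_orbitExponent_smul_out (g := g) (g • a)
    rw [hq] at hga
    beta_reduce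
    rw [hq, ← mul_smul, ← zpow_one_add]
    refine zpow_smul_congr (v _).2 ?_
    rw [hga, zpow_one_add, mul_smul, zpow_orbitExponent_smul_out]⟩
  left_inv f := Subtype.ext <| funext fun a => by
    dsimp only
    rw [← map_zpow_smul f.2, zpow_orbitExponent_smul_out]
  right_inv v := funext fun ω => Subtype.ext <| by
    dsimp only
    have h := zpow_orbitExponent_smul_out (g := g) ω.out
    rw [Quotient.out_eq'] at h ⊢
    simpa using zpow_smul_congr (j := 0) (v ω).2 (by rwa [zpow_zero, one_smul])

theorem card_equivariant_eq_prod [Fintype (orbitRel.Quotient (zpowers g) α)] :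
    Nat.card {f : α → β // ∀ a, f (g • a) = g • f a} =
      ∏ ω : orbitRel.Quotient (zpowers g) α, Nat.card {b : β // g ^ period g ω.out • b = b} := by
  rw [Nat.card_congr (equivariantEquivPi g), Nat.card_pi]

theorem card_filter_pow_smul_eq_self [Fintype α] [DecidableEq α]
    [Fintype (orbitRel.Quotient (zpowers g) α)] (L : ℕ) :
    #{x : α | g ^ L • x = x} =
      ∑ ω : orbitRel.Quotient (zpowers g) α, if period g ω.out ∣ L then period g ω.out else 0 := by
  classical
  rw [card_eq_sum_card_fiberwise (f := fun x => (Quotient.mk'' x : orbitRel.Quotient (zpowers g) α))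
    (t := univ) fun _ _ => mem_univ _]
  refine sum_congr rfl fun ω _ => ?_
  have hper (x : α) :
      period g x = period g (Quotient.mk'' x : orbitRel.Quotient (zpowers g) α).out := by
    conv_lhs => rw [← zpow_orbitExponent_smul_out (g := g) x]
    exact period_zpow_smul g _ _
  have hcard : #{x | (Quotient.mk'' x : orbitRel.Quotient (zpowers g) α) = ω} = period g ω.out := by
    rw [← card_orbit_zpowers, ← orbitRel.Quotient.orbit_eq_orbit_out ω Quotient.out_eq',
      ← Fintype.card_subtype, ← Nat.card_eq_fintype_card]
    exact Nat.card_congr (subtypeEquivRight fun _ => orbitRel.Quotient.mem_orbit.symm)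
  split_ifs with h
  · rw [← hcard]
    congr 1
    ext x
    simp only [mem_filter, mem_univ, true_and, and_iff_right_iff_imp]
    rintro rfl
    rwa [pow_smul_eq_iff_period_dvd, hper x]
  · rw [card_eq_zero, filter_eq_empty_iff]
    rintro x hx rfl
    rw [mem_filter, pow_smul_eq_iff_period_dvd, hper x] at hx
    exact h hx.2

theorem sum_natCard_fixedBy_eq_natCard_orbits_mul_card_group (G X : Type*) [Group G] [Fintype G]
    [MulAction G X] [Finite X] :
    ∑ g : G, Nat.card (fixedBy X g) = Nat.card (orbitRel.Quotient G X) * Fintype.card G := by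
  classical
  let _ := Fintype.ofFinite X
  simp only [Nat.card_eq_fintype_card]
  exact sum_card_fixedBy_eq_card_orbits_mul_card_group G X

end MulAction

theorem Multiset.sum_map_ite_dvd {L : ℕ} (hL : L ≠ 0) (s : Multiset ℕ) :
    (s.map fun k => if k ∣ L then k else 0).sum = ∑ j ∈ L.divisors, j * s.count j := by
  induction s using Multiset.induction_on with
  | empty => simp
  | cons a s ih =>
    simp only [Multiset.map_cons, Multiset.sum_cons, ih, Multiset.count_cons, mul_add,
      sum_add_distrib, mul_ite, mul_one, mul_zero, sum_ite_eq', Nat.mem_divisors, ne_eq, hL,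
      not_false_eq_true, and_true, add_comm]

namespace Equiv.Perm

theorem orbitRel_zpowers_iff {α : Type*} (σ : Perm α) {x y : α} :
    orbitRel (zpowers σ) α x y ↔ σ.SameCycle y x := by
  rw [orbitRel_apply, mem_orbit_iff]
  constructor
  · rintro ⟨⟨_, i, rfl⟩, h⟩
    exact ⟨i, h⟩
  · rintro ⟨i, h⟩
    exact ⟨⟨σ ^ i, i, rfl⟩, h⟩

variable {α : Type*} [Fintype α] [DecidableEq α] (σ : Perm α)

theorem period_eq_card_support_cycleOf {x : α} (hx : σ x ≠ x) :
    period σ x = #(σ.cycleOf x).support := by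
  have hc := σ.isCycleOn_support_cycleOf x
  have hx' : x ∈ (σ.cycleOf x).support :=
    mem_support_cycleOf_iff.mpr ⟨.rfl, mem_support.mpr hx⟩
  exact Nat.dvd_antisymm (pow_smul_eq_iff_period_dvd.mp ((hc.pow_apply_eq hx').mpr dvd_rfl))
    ((hc.pow_apply_eq hx').mp (pow_period_smul σ x))

def cycleFactorOrFixedPoint (x : α) : Perm α ⊕ α :=
  if σ x = x then .inr x else .inl (σ.cycleOf x)

theorem cycleFactorOrFixedPoint_eq_iff {x y : α} :
    σ.cycleFactorOrFixedPoint x = σ.cycleFactorOrFixedPoint y ↔ σ.SameCycle x y := by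
  unfold cycleFactorOrFixedPoint
  by_cases hx : σ x = x <;> by_cases hy : σ y = y
  · simp only [hx, hy, if_true, Sum.inr.injEq]
    exact ⟨fun h => h ▸ .rfl, fun h => h.eq_of_left hx⟩
  · simp only [hx, hy, if_true, if_false, reduceCtorEq, false_iff]
    exact fun h => hy (h.apply_eq_self_iff.mp hx)
  · simp only [hx, hy, if_true, if_false, reduceCtorEq, false_iff]
    exact fun h => hx (h.apply_eq_self_iff.mpr hy)
  · simp only [hx, hy, if_false, Sum.inl.injEq]
    exact (sameCycle_iff_cycleOf_eq_of_mem_support (mem_support.mpr hx)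
      (mem_support.mpr hy)).symm

theorem cycleFactorOrFixedPoint_out (x : α) :
    σ.cycleFactorOrFixedPoint (Quotient.mk'' x : orbitRel.Quotient (zpowers σ) α).out =
      σ.cycleFactorOrFixedPoint x :=
  (cycleFactorOrFixedPoint_eq_iff σ).mpr
    ((orbitRel_zpowers_iff σ).mp (Quotient.mk_out' (s₁ := orbitRel (zpowers σ) α) x)).symm

theorem image_cycleFactorOrFixedPoint :
    univ.image σ.cycleFactorOrFixedPoint =
      (σ.cycleFactorsFinset.map .inl).disjUnion (σ.supportᶜ.map .inr)
        (by simp [disjoint_left]) := by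
  ext (c | x)
  · simp only [cycleFactorOrFixedPoint, mem_image, mem_univ, true_and, mem_disjUnion, mem_map,
      Embedding.inl_apply, Sum.inl.injEq, exists_eq_right, Embedding.inr_apply, reduceCtorEq,
      and_false, exists_false, or_false]
    constructor
    · rintro ⟨a, ha⟩
      split_ifs at ha with h
      cases ha
      exact cycleOf_mem_cycleFactorsFinset_iff.mpr (mem_support.mpr h)
    · intro hc
      obtain ⟨a, ha⟩ := (mem_cycleFactorsFinset_iff.mp hc).1.nonempty_support
      have hσa := mem_cycleFactorsFinset_support_le hc ha
      exact ⟨a, by rw [if_neg (mem_support.mp hσa), cycle_is_cycleOf ha hc]⟩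
  · simp only [cycleFactorOrFixedPoint, mem_image, mem_univ, true_and, mem_disjUnion, mem_map,
      Embedding.inl_apply, reduceCtorEq, and_false, exists_false, Embedding.inr_apply,
      Sum.inr.injEq, exists_eq_right, mem_compl, mem_support, not_not, false_or]
    constructor
    · rintro ⟨a, ha⟩
      split_ifs at ha with h
      cases ha
      exact h
    · intro h
      exact ⟨x, if_pos h⟩

theorem map_period_out_eq_parts [Fintype (orbitRel.Quotient (zpowers σ) α)] :
    univ.val.map (fun ω : orbitRel.Quotient (zpowers σ) α => period σ ω.out) =
      σ.partition.parts := by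
  set κ := fun ω : orbitRel.Quotient (zpowers σ) α => σ.cycleFactorOrFixedPoint ω.out
  have hperiod : (fun ω : orbitRel.Quotient (zpowers σ) α => period σ ω.out) =
      Sum.elim (fun c => #c.support) (fun _ => 1) ∘ κ := funext fun ω => by
    simp only [κ, comp_apply, cycleFactorOrFixedPoint]
    split_ifs with h
    · exact period_eq_one_iff.mpr h
    · exact period_eq_card_support_cycleOf σ h
  have hinj : Injective κ := by
    intro ω ω' h
    rw [← Quotient.out_eq' ω, ← Quotient.out_eq' ω']
    exact Quotient.sound'
      ((orbitRel_zpowers_iff σ).mpr ((cycleFactorOrFixedPoint_eq_iff σ).mp h).symm)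
  have himage : univ.image κ = univ.image σ.cycleFactorOrFixedPoint := by
    ext c
    simp only [mem_image, mem_univ, true_and]
    constructor
    · rintro ⟨ω, rfl⟩
      exact ⟨_, rfl⟩
    · rintro ⟨x, rfl⟩
      exact ⟨Quotient.mk'' x, cycleFactorOrFixedPoint_out σ x⟩
  rw [hperiod, ← Multiset.map_map, ← image_val_of_injOn hinj.injOn, himage,
    image_cycleFactorOrFixedPoint, disjUnion_val, map_val, map_val, Multiset.map_add,
    Multiset.map_map, Multiset.map_map, parts_partition, cycleType_def, ← card_compl]
  exact congrArg₂ (· + ·) rfl (Multiset.map_const' _ 1)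

theorem card_fixedPoints_pow {L : ℕ} (hL : L ≠ 0) :
    Nat.card (fixedPoints ⇑(σ ^ L)) = ∑ j ∈ L.divisors, j * σ.partition.parts.count j := by
  classical
  let _ := Fintype.ofFinite (orbitRel.Quotient (zpowers σ) α)
  calc Nat.card (fixedPoints ⇑(σ ^ L)) = #{x | σ ^ L • x = x} := by
        rw [← Fintype.card_subtype, ← Nat.card_eq_fintype_card]
        rfl
    _ = ∑ ω : orbitRel.Quotient (zpowers σ) α,
          if period σ ω.out ∣ L then period σ ω.out else 0 := card_filter_pow_smul_eq_self L
    _ = (σ.partition.parts.map fun k => if k ∣ L then k else 0).sum := by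
        rw [← map_period_out_eq_parts, Multiset.map_map]
        rfl
    _ = _ := Multiset.sum_map_ite_dvd hL _

end Equiv.Perm

namespace FreeSemigroup

variable {α β γ : Type*}

theorem map_mk (f : α → β) (x : α) (l : List α) : map f ⟨x, l⟩ = ⟨f x, l.map f⟩ := by
  induction l generalizing x with
  | nil => rfl
  | cons a l ih =>
    rw [show (⟨x, a :: l⟩ : FreeSemigroup α) = of x * ⟨a, l⟩ from rfl, map_mul, map_of, ih]
    rfl

theorem map_id : map (id : α → α) = MulHom.id _ := hom_ext rfl

theorem map_comp_map (f : β → γ) (g : α → β) : (map f).comp (map g) = map (f ∘ g) := hom_ext rfl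

theorem map_injective {f : α → β} (hf : Injective f) : Injective (map f) := by
  rintro ⟨x, l⟩ ⟨y, k⟩ h
  simp only [map_mk, FreeSemigroup.mk.injEq] at h
  rw [hf h.1, (List.map_injective_iff.mpr hf) h.2]

theorem map_eq_self_iff {f : α → α} {w : FreeSemigroup α} :
    map f w = w ↔ w ∈ Set.range (map ((↑) : fixedPoints f → α)) := by
  constructor
  · obtain ⟨x, l⟩ := w
    intro h
    simp only [map_mk, FreeSemigroup.mk.injEq] at h
    have hl : ∀ y ∈ l, IsFixedPt f y :=
      List.map_inj_left.mp (h.2.trans (List.map_id l).symm)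
    lift l to List (fixedPoints f) using hl
    exact ⟨⟨⟨x, h.1⟩, l⟩, by rw [map_mk]⟩
  · rintro ⟨u, rfl⟩
    rw [← MulHom.comp_apply, map_comp_map]
    exact congrArg (map · u) (funext fun y => y.2)

section Length

variable (α) (m : ℕ)

instance isEmpty_length_le_zero : IsEmpty {w : FreeSemigroup α // w.length ≤ 0} :=
  ⟨fun w => absurd w.2 (by simp [length])⟩

def lengthEqEquiv (k : ℕ) : {w : FreeSemigroup α // w.length = k + 1} ≃ α × List.Vector α k where
  toFun w := (w.1.head, ⟨w.1.tail, Nat.succ_injective w.2⟩)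
  invFun p := ⟨⟨p.1, p.2.1⟩, congrArg (· + 1) p.2.2⟩
  left_inv _ := rfl
  right_inv _ := rfl

def lengthLESuccEquiv : {w : FreeSemigroup α // w.length ≤ m + 1} ≃
    {w : FreeSemigroup α // w.length ≤ m} ⊕ {w : FreeSemigroup α // w.length = m + 1} :=
  (subtypeEquivRight fun _ => Nat.le_succ_iff).trans
    (subtypeOrEquiv _ _ fun _ hp hq w hw => ((Nat.lt_succ_of_le (hp w hw)).ne (hq w hw)).elim)

instance finite_length_le [Finite α] : Finite {w : FreeSemigroup α // w.length ≤ m} := by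
  induction m with
  | zero => infer_instance
  | succ m ih =>
    have : Finite {w : FreeSemigroup α // w.length = m + 1} := .of_equiv _ (lengthEqEquiv α m).symm
    exact .of_equiv _ (lengthLESuccEquiv α m).symm

theorem card_length_le [Finite α] :
    Nat.card {w : FreeSemigroup α // w.length ≤ m} = ∑ k ∈ Icc 1 m, Nat.card α ^ k := by
  induction m with
  | zero => rw [Nat.card_of_isEmpty]; rfl
  | succ m ih =>
    have : Finite {w : FreeSemigroup α // w.length = m + 1} := .of_equiv _ (lengthEqEquiv α m).symm
    rw [Nat.card_congr (lengthLESuccEquiv α m), Nat.card_sum, ih,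
      Nat.card_congr (lengthEqEquiv α m), Nat.card_prod,
      Nat.card_congr (vectorEquivFin α m), Nat.card_fun, Nat.card_fin, ← pow_succ',
      sum_Icc_succ_top (by omega)]

theorem card_length_le_map_eq_self [Finite α] (f : α → α) :
    Nat.card {w : FreeSemigroup α // w.length ≤ m ∧ map f w = w}
      = ∑ k ∈ Icc 1 m, Nat.card (fixedPoints f) ^ k := by
  rw [← card_length_le]
  refine (Nat.card_congr (Equiv.ofBijective
    (fun u => ⟨map (↑) u.1, (length_map _ _).trans_le u.2, map_eq_self_iff.mpr ⟨u, rfl⟩⟩) ?_)).symm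
  refine ⟨fun u v h =>
    Subtype.ext (map_injective Subtype.val_injective (congrArg Subtype.val h)), ?_⟩
  rintro ⟨w, hw, hfix⟩
  obtain ⟨u, rfl⟩ := map_eq_self_iff.mp hfix
  exact ⟨⟨u, (length_map _ _).symm.trans_le hw⟩, rfl⟩

end Length

section Action

open Equiv.Perm

instance : MulAction (Perm α) (FreeSemigroup α) where
  smul σ := map σ
  one_smul := DFunLike.congr_fun map_id
  mul_smul σ τ := DFunLike.congr_fun (map_comp_map σ τ).symm

instance : MulAction (Perm α) (FreeSemigroup α →ₙ* FreeSemigroup α) where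
  smul σ φ := (map σ).comp (φ.comp (map ⇑σ⁻¹))
  one_smul φ := MulHom.ext fun w => by
    show (1 : Perm α) • φ ((1 : Perm α)⁻¹ • w) = φ w
    rw [inv_one, one_smul, one_smul]
  mul_smul σ τ φ := MulHom.ext fun w => by
    show (σ * τ) • φ ((σ * τ)⁻¹ • w) = σ • τ • φ (τ⁻¹ • σ⁻¹ • w)
    rw [mul_inv_rev, mul_smul, mul_smul]

theorem comp_map_eq_map_comp_iff {σ : Perm α} {φ ψ : FreeSemigroup α →ₙ* FreeSemigroup α} :
    ψ.comp (map σ) = (map σ).comp φ ↔ σ • φ = ψ := by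
  constructor
  · intro h
    refine MulHom.ext fun w => ?_
    calc (σ • φ) w = σ • φ (σ⁻¹ • w) := rfl
      _ = ψ (σ • σ⁻¹ • w) := (DFunLike.congr_fun h (σ⁻¹ • w)).symm
      _ = ψ w := by rw [smul_inv_smul]
  · rintro rfl
    refine MulHom.ext fun w => ?_
    show σ • φ (σ⁻¹ • σ • w) = σ • φ w
    rw [inv_smul_smul]

variable (α) (m : ℕ)

def lengthLE : SubMulAction (Perm α) (FreeSemigroup α) where
  carrier := {w | w.length ≤ m}
  smul_mem' σ w hw := (length_map σ w).trans_le hw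

def boundedEnd : SubMulAction (Perm α) (FreeSemigroup α →ₙ* FreeSemigroup α) where
  carrier := {φ | ∀ a, (φ (of a)).length ≤ m}
  smul_mem' σ _ hφ a := (length_map σ _).trans_le (hφ (σ⁻¹ a))

def boundedEndEquiv : boundedEnd α m ≃ (α → lengthLE α m) where
  toFun φ a := ⟨φ.1 (of a), φ.2 a⟩
  invFun f := ⟨lift fun a => (f a : FreeSemigroup α), fun a => (f a).2⟩
  left_inv _ := Subtype.ext (hom_ext rfl)
  right_inv _ := rfl

def fixedByBoundedEndEquiv (σ : Perm α) :
    fixedBy (boundedEnd α m) σ ≃ {f : α → lengthLE α m // ∀ a, f (σ • a) = σ • f a} :=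
  (boundedEndEquiv α m).subtypeEquiv fun φ => by
    rw [mem_fixedBy, Subtype.ext_iff, SubMulAction.val_smul, ← comp_map_eq_map_comp_iff]
    exact ⟨fun h a => Subtype.ext (DFunLike.congr_fun h (of a)),
      fun h => hom_ext (funext fun a => congrArg Subtype.val (h a))⟩

instance [Finite α] : Finite (lengthLE α m) := finite_length_le α m

instance [Finite α] : Finite (boundedEnd α m) := .of_equiv _ (boundedEndEquiv α m).symm

theorem exists_comp_map_eq_iff_orbitRel (φ ψ : boundedEnd α m) :
    (∃ σ : Perm α, (ψ : FreeSemigroup α →ₙ* FreeSemigroup α).comp (map σ) = (map σ).comp φ) ↔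
      orbitRel (Perm α) (boundedEnd α m) φ ψ := by
  rw [orbitRel_apply, mem_orbit_symm, mem_orbit_iff]
  simp only [comp_map_eq_map_comp_iff, Subtype.ext_iff, SubMulAction.val_smul]

theorem card_fixed_lengthLE [Finite α] (σ : Perm α) :
    Nat.card {w : lengthLE α m // σ • w = w} = ∑ l ∈ Icc 1 m, Nat.card (fixedPoints σ) ^ l := by
  rw [← card_length_le_map_eq_self]
  exact Nat.card_congr
    ((subtypeEquivRight fun _ => Subtype.ext_iff).trans
      (subtypeSubtypeEquivSubtypeInter (· ∈ lengthLE α m) fun w => map σ w = w))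

theorem card_fixedBy_boundedEnd [Fintype α] [DecidableEq α] (σ : Perm α) :
    Nat.card (fixedBy (boundedEnd α m) σ) = (σ.partition.parts.map fun k =>
      ∑ l ∈ Icc 1 m, (∑ j ∈ k.divisors, j * σ.partition.parts.count j) ^ l).prod := by
  classical
  let _ := Fintype.ofFinite (orbitRel.Quotient (zpowers σ) α)
  rw [Nat.card_congr (fixedByBoundedEndEquiv α m σ), card_equivariant_eq_prod]
  nth_rewrite 2 [← map_period_out_eq_parts]
  rw [Multiset.map_map, ← prod_eq_multiset_prod]
  refine prod_congr rfl fun ω _ => ?_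
  rw [card_fixed_lengthLE, card_fixedPoints_pow σ (period_pos_of_orderOf_pos (orderOf_pos σ) _).ne']
  rfl

end Action

end FreeSemigroup

open FreeSemigroup in
theorem number_of_m_endomorphisms_up_to_combinatorial_equivalence_general
    {D : Type*} [Fintype D] [DecidableEq D] {n m : ℕ}
    (hcard : Fintype.card D = n) :
    (Nat.card (Quot (fun φ ψ : {φ : FreeSemigroup D →ₙ* FreeSemigroup D //
          ∀ d : D, (φ (FreeSemigroup.of d)).length ≤ m} =>
        ∃ g : Equiv.Perm D,
          (ψ : FreeSemigroup D →ₙ* FreeSemigroup D).comp (FreeSemigroup.map ⇑g)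
            = (FreeSemigroup.map ⇑g).comp
                (φ : FreeSemigroup D →ₙ* FreeSemigroup D))) : ℚ)
      = (1 / (n.factorial : ℚ)) * ∑ g : Equiv.Perm D,
          ((((fullCycleType g).map (fun ki =>
            ∑ k ∈ Finset.Icc 1 m,
              (∑ j ∈ ki.divisors, j * cycleCount g j) ^ k)).prod : ℕ) : ℚ) := by
  subst hcard
  have burnside := sum_natCard_fixedBy_eq_natCard_orbits_mul_card_group (Perm D) (boundedEnd D m)
  simp only [card_fixedBy_boundedEnd, Fintype.card_perm] at burnside
  refine (congrArg Nat.cast (Nat.card_congr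
    (Quot.congr (Equiv.refl _) (exists_comp_map_eq_iff_orbitRel D m)))).trans ?_
  field_simp
  exact_mod_cast burnside.symm

/-- **Theorem 1.** If `|D| = n`, the number of `m`-endomorphisms on the free semigroup `D⁺`,
up to combinatorial equivalence, is
`(1/n!) · Σ_{g ∈ Sym(D)} ∏_{cycle lengths kᵢ of g} (Σ_{k=1}^m (Σ_{j ∣ kᵢ} j·c(g,j))^k)`. -/
theorem number_of_m_endomorphisms_up_to_combinatorial_equivalence
    {D : Type*} [Fintype D] [DecidableEq D] {n m : ℕ} (hn : 1 ≤ n) (hm : 1 ≤ m)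
    (hcard : Fintype.card D = n) :
    (Nat.card (Quot (fun φ ψ : {φ : FreeSemigroup D →ₙ* FreeSemigroup D //
          ∀ d : D, (φ (FreeSemigroup.of d)).length ≤ m} =>
        ∃ g : Equiv.Perm D,
          (ψ : FreeSemigroup D →ₙ* FreeSemigroup D).comp (FreeSemigroup.map ⇑g)
            = (FreeSemigroup.map ⇑g).comp
                (φ : FreeSemigroup D →ₙ* FreeSemigroup D))) : ℚ)
      = (1 / (n.factorial : ℚ)) * ∑ g : Equiv.Perm D,
          ((((fullCycleType g).map (fun ki =>
            ∑ k ∈ Finset.Icc 1 m,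
              (∑ j ∈ ki.divisors, j * cycleCount g j) ^ k)).prod : ℕ) : ℚ) :=
  number_of_m_endomorphisms_up_to_combinatorial_equivalence_general hcard
end

section
/- Let D be a finite set, let m ≥ 1, and let Ω be the set of all maps f : D → {W ∈ D⁺ : |W| ≤ m}. Let g ∈ Sym(D) have cycle type k_1, …, k_ℓ, and for each 1 ≤ i ≤ ℓ choose an element d_i from the cycle of g of length k_i. For f ∈ Ω, the equation f ∘ g = φ_g ∘ f holds if and only if for each 1 ≤ i ≤ ℓ both of the following hold: (1) (f ∘ g^j)(d_i) = (φ_g^j ∘ f)(d_i) for all natural numbers j; and (2) f(d_i) is a string d′_1 … d′_k with k ≤ m such that each d′_t ∈ D lies in a cycle of g whose length divides k_i. -/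
/-- The list of letters of a nonempty word in the free semigroup. -/
def FreeSemigroup.letters {D : Type*} (W : FreeSemigroup D) : List D :=
  W.head :: W.tail

lemma letters_mul {D : Type*} (x y : FreeSemigroup D) :
    (x * y).letters = x.letters ++ y.letters := by
  simp [FreeSemigroup.letters, FreeSemigroup.head_mul, FreeSemigroup.tail_mul]

lemma letters_map {D E : Type*} (h : D → E) (W : FreeSemigroup D) :
    (FreeSemigroup.map h W).letters = W.letters.map h := by
  induction W using FreeSemigroup.recOnMul with
  | ih1 x => rfl
  | ih2 x y hx hy =>
      simp only [FreeSemigroup.letters, List.map_cons, List.cons.injEq] at hy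
      simp [map_mul, letters_mul, FreeSemigroup.letters, hy.1, hy.2]

lemma letters_iterate_map {D : Type*} (h : D → D) (n : ℕ) (W : FreeSemigroup D) :
    ((FreeSemigroup.map h)^[n] W).letters = W.letters.map (h^[n]) := by
  induction n with
  | zero => simp
  | succ n ih =>
      rw [Function.iterate_succ_apply', letters_map, ih, List.map_map,
        ← Function.iterate_succ' h n]

lemma list_map_eq_self {D : Type*} {h : D → D} :
    ∀ {L : List D}, L.map h = L → ∀ x ∈ L, h x = x := by
  intro L
  induction L with
  | nil => simp
  | cons a L ih =>
      intro hmap x hx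
      simp only [List.map_cons, List.cons.injEq] at hmap
      rcases List.mem_cons.mp hx with rfl | hx
      · exact hmap.1
      · exact ih hmap.2 x hx

/-- **Lemma 1.** Let `g ∈ Sym(D)` have cycle type `k₁, …, k_ℓ`, and for each `i` choose an
element `dᵢ` from the cycle of `g` of length `kᵢ` (so `kᵢ` is the smallest positive period of
`dᵢ` under `g`). Then for `f ∈ Ω` (i.e. `f : D → D⁺` with `|f x| ≤ m`), the equation
`f ∘ g = φ_g ∘ f` holds iff for each `i`:
(1) `(f ∘ gʲ)(dᵢ) = (φ_gʲ ∘ f)(dᵢ)` for all `j ∈ ℕ`, and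
(2) `f(dᵢ)` is a string `d′₁ … d′_k` with `k ≤ m` whose letters each lie in a cycle of `g`
whose length divides `kᵢ`. -/
theorem commutation_iff_conditions_on_cycle_representatives
    {D : Type*} [Fintype D] [DecidableEq D] {m : ℕ} (hm : 1 ≤ m)
    (g : Equiv.Perm D) (ℓ : ℕ) (k : Fin ℓ → ℕ) (d : Fin ℓ → D)
    (hk : Multiset.map k Finset.univ.val = fullCycleType g)
    (hd : ∀ i, Function.minimalPeriod ⇑g (d i) = k i)
    (hdistinct : ∀ i j, i ≠ j → ¬ g.SameCycle (d i) (d j))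
    (f : D → FreeSemigroup D) (hf : ∀ x, (f x).length ≤ m) :
    f ∘ ⇑g = ⇑(FreeSemigroup.map ⇑g) ∘ f ↔
      ∀ i : Fin ℓ,
        (∀ j : ℕ, f ((g ^ j) (d i)) = (⇑(FreeSemigroup.map ⇑g))^[j] (f (d i))) ∧
        ((f (d i)).length ≤ m ∧
          ∀ x ∈ (f (d i)).letters, Function.minimalPeriod ⇑g x ∣ k i) := by
  have hkpos : ∀ i, 0 < k i := by
    intro i
    rw [← hd i]
    apply Function.IsPeriodicPt.minimalPeriod_pos (orderOf_pos g)
    show (⇑g)^[orderOf g] (d i) = d i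
    rw [← Equiv.Perm.coe_pow, pow_orderOf_eq_one]; rfl
  constructor
  · intro hcomm
    have key : ∀ x, f (g x) = FreeSemigroup.map ⇑g (f x) := fun x => congrFun hcomm x
    intro i
    have h1 : ∀ j : ℕ, f ((g ^ j) (d i)) = (⇑(FreeSemigroup.map ⇑g))^[j] (f (d i)) := by
      intro j
      induction j with
      | zero => simp
      | succ j ih =>
          rw [pow_succ', Equiv.Perm.mul_apply, key, ih, Function.iterate_succ_apply']
    refine ⟨h1, hf _, ?_⟩
    intro x hx
    have hper : (g ^ (k i)) (d i) = d i := by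
      rw [← hd i, ← Equiv.Perm.iterate_eq_pow]
      exact Function.iterate_minimalPeriod
    have h2 := h1 (k i)
    rw [hper] at h2
    have h3 := congrArg FreeSemigroup.letters h2
    rw [letters_iterate_map] at h3
    exact Function.IsPeriodicPt.minimalPeriod_dvd (list_map_eq_self h3.symm x hx)
  · intro hcond
    classical
    set S : Fin ℓ → Finset D := fun i => Finset.univ.filter (fun x => g.SameCycle (d i) x)
      with hS
    have hcard : ∀ i, (S i).card = k i := by
      intro i
      have himg : S i = Finset.image (fun t : Fin (k i) => (g ^ (t : ℕ)) (d i)) Finset.univ := by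
        ext x
        simp only [hS, Finset.mem_filter, Finset.mem_univ, true_and, Finset.mem_image]
        constructor
        · intro hx
          obtain ⟨n, hn, hnx⟩ := hx.exists_pow_eq'
          refine ⟨⟨n % k i, Nat.mod_lt _ (hkpos i)⟩, ?_⟩
          have h := Function.iterate_mod_minimalPeriod_eq (f := ⇑g) (x := d i) (n := n)
          rw [hd i] at h
          rw [← hnx]
          simpa [Equiv.Perm.iterate_eq_pow] using h
        · rintro ⟨t, _, rfl⟩
          exact ⟨(t : ℕ), by simp [zpow_natCast]⟩
      rw [himg, Finset.card_image_of_injOn, Finset.card_univ, Fintype.card_fin]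
      intro t1 _ t2 _ h12
      have := Function.iterate_injOn_Iio_minimalPeriod (f := ⇑g) (x := d i)
        (by rw [hd i]; exact Set.mem_Iio.mpr t1.2) (by rw [hd i]; exact Set.mem_Iio.mpr t2.2)
        (by simpa [Equiv.Perm.iterate_eq_pow] using h12)
      exact Fin.ext this
    have hdisj : ∀ i j : Fin ℓ, i ≠ j → Disjoint (S i) (S j) := by
      intro i j hij
      rw [Finset.disjoint_left]
      intro x hxi hxj
      simp only [hS, Finset.mem_filter, Finset.mem_univ, true_and] at hxi hxj
      exact hdistinct i j hij (hxi.trans hxj.symm)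
    have hsum : ∑ i, k i = Fintype.card D := by
      have h := congrArg Multiset.sum hk
      have hle : g.support.card ≤ Fintype.card D := by
        simpa using Finset.card_le_univ g.support
      simp only [fullCycleType, Multiset.sum_add, Equiv.Perm.sum_cycleType,
        Multiset.sum_replicate, smul_eq_mul, mul_one] at h
      rw [Finset.sum, h]
      omega
    have hunion : Finset.univ.biUnion S = Finset.univ := by
      apply Finset.eq_univ_of_card
      rw [Finset.card_biUnion (fun i _ j _ hij => hdisj i j hij)]
      simp only [hcard, hsum, Finset.card_univ]
    funext x
    have hx : x ∈ Finset.univ.biUnion S := hunion ▸ Finset.mem_univ x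
    obtain ⟨i, -, hxi⟩ := Finset.mem_biUnion.mp hx
    simp only [hS, Finset.mem_filter, Finset.mem_univ, true_and] at hxi
    obtain ⟨n, -, rfl⟩ := hxi.exists_pow_eq'
    show f (g ((g ^ n) (d i))) = FreeSemigroup.map ⇑g (f ((g ^ n) (d i)))
    rw [← Equiv.Perm.mul_apply, ← pow_succ', (hcond i).1 (n + 1), (hcond i).1 n,
      Function.iterate_succ_apply']
end

section
/- Let D be a finite set with |D| = n ≥ 1, let m ≥ 1, let p(n) be the number of integer partitions of n, and let g_1, …, g_{p(n)} ∈ Sym(D) have pairwise distinct cycle types realizing all cycle types in Sym(D). For each r let k_{r1}, …, k_{rℓ_r} be the cycle type of g_r, and let C_{g_r} be the set of permutations in Sym(D) with the same cycle type as g_r. Then the number of m-uniform endomorphisms on D⁺, up to combinatorial equivalence, equals (1/n!) · Σ_{r=1}^{p(n)} |C_{g_r}| · ∏_{i=1}^{ℓ_r} ( Σ_{j | k_{ri}} j·c(g_r, j) )^m. -/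
open Function Finset MulAction

theorem Function.iterate_eq_iterate_of_isPeriodicPt {α β : Type*} {f : α → α} {g : β → β}
    {x : α} {y : β} (hx : x ∈ periodicPts f) (hy : IsPeriodicPt g (minimalPeriod f x) y)
    {a b : ℕ} (h : f^[a] x = f^[b] x) : g^[a] y = g^[b] y := by
  have hp := minimalPeriod_pos_of_mem_periodicPts hx
  have hmod : a % minimalPeriod f x = b % minimalPeriod f x := by
    rw [← iterate_mod_minimalPeriod_eq, ← iterate_mod_minimalPeriod_eq (n := b)] at h
    exact (iterate_eq_iterate_iff_of_lt_minimalPeriod (Nat.mod_lt _ hp) (Nat.mod_lt _ hp)).mp h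
  rw [← hy.iterate_mod_apply a, ← hy.iterate_mod_apply b, hmod]

theorem Function.iterate_comp_left {ι α : Type*} (f : α → α) (k : ℕ) :
    (fun v : ι → α => f ∘ v)^[k] = fun v => f^[k] ∘ v := by
  induction k with
  | zero => rfl
  | succ k ih => rw [iterate_succ, ih]; rfl

theorem Function.isPeriodicPt_comp_left_iff {ι α : Type*} {f : α → α} {k : ℕ}
    {v : ι → α} :
    IsPeriodicPt (fun v : ι → α => f ∘ v) k v ↔ ∀ i, IsPeriodicPt f k (v i) := by
  rw [IsPeriodicPt, IsFixedPt, iterate_comp_left, funext_iff]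
  rfl

theorem MulAction.sum_natCard_fixedBy_eq_natCard_orbits_mul_natCard_group (G X : Type*)
    [Group G] [Fintype G] [MulAction G X] [Finite X] :
    ∑ g : G, Nat.card (fixedBy X g) = Nat.card (orbitRel.Quotient G X) * Nat.card G := by
  have := Fintype.ofFinite X
  have := Fintype.ofFinite (orbitRel.Quotient G X)
  have := fun g : G => Fintype.ofFinite (fixedBy X g)
  simp only [Nat.card_eq_fintype_card]
  exact sum_card_fixedBy_eq_card_orbits_mul_card_group G X

def MulAction.quotEquivOrbitRelQuotient {G X Y : Type*} [Group G] [MulAction G Y] (W : X ≃ Y)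
    {r : X → X → Prop} (hr : ∀ x y, r x y ↔ ∃ g : G, g • W x = W y) :
    Quot r ≃ orbitRel.Quotient G Y :=
  Quot.congr W fun x y => by
    rw [hr, ← mem_orbit_iff, mem_orbit_symm]
    rfl

theorem Fintype.sum_comp_eq_sum_card_fiber_of_reps {ι X Y M : Type*} [Fintype ι] [Fintype X]
    [DecidableEq Y] [AddCommMonoid M] (c : X → Y) (g : ι → X) (hg : Injective (c ∘ g))
    (hc : ∀ x, ∃ r, c x = c (g r)) (F : Y → M) :
    ∑ x, F (c x) = ∑ r, #{x | c x = c (g r)} • F (c (g r)) := by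
  have himage : univ.image c = univ.image (c ∘ g) := by
    ext y
    simp only [mem_image, mem_univ, true_and, comp_apply]
    exact ⟨fun ⟨x, hx⟩ => (hc x).imp fun r hr => hr.symm.trans hx,
      fun ⟨r, hr⟩ => ⟨g r, hr⟩⟩
  rw [Finset.sum_comp, himage, sum_image fun r _ s _ h => hg h]
  rfl

namespace Equiv.Perm

section Orbits

variable {α : Type*} (σ : Perm α) {β : Type*} (t : β → β)

abbrev Orbits : Type _ := Quotient (SameCycle.setoid σ)

theorem mk_eq_iff_sameCycle_out {x : α} {q : σ.Orbits} :
    Quotient.mk _ x = q ↔ σ.SameCycle q.out x := by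
  rw [← Quotient.out_eq q, Quotient.eq, Quotient.out_eq]
  exact ⟨fun h => h.symm, fun h => h.symm⟩

variable [Finite α]

theorem minimalPeriod_pos (x : α) : 0 < minimalPeriod σ x :=
  minimalPeriod_pos_of_mem_periodicPts (σ.injective.mem_periodicPts x)

theorem exists_iterate_out_eq (x : α) : ∃ n, σ^[n] (Quotient.mk _ x : σ.Orbits).out = x := by
  obtain ⟨n, hn⟩ := ((mk_eq_iff_sameCycle_out σ).mp rfl).exists_nat_pow_eq
  exact ⟨n, by rwa [iterate_eq_pow]⟩

noncomputable def indexFromOut (x : α) : ℕ := (σ.exists_iterate_out_eq x).choose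

theorem iterate_indexFromOut (x : α) :
    σ^[σ.indexFromOut x] (Quotient.mk _ x : σ.Orbits).out = x :=
  (σ.exists_iterate_out_eq x).choose_spec

noncomputable def semiconjEquiv :
    {f : α → β // Semiconj f σ t} ≃
      ∀ q : σ.Orbits, {y // IsPeriodicPt t (minimalPeriod σ q.out) y} where
  toFun f q := ⟨f.1 q.out, (isPeriodicPt_minimalPeriod σ q.out).map f.2⟩
  invFun u := ⟨fun x => t^[σ.indexFromOut x] (u (Quotient.mk _ x)).1, fun x => by
    have hq : (Quotient.mk _ (σ x) : σ.Orbits) = Quotient.mk _ x :=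
      Quotient.sound (sameCycle_apply_left.mpr (SameCycle.refl _ _))
    have h := σ.iterate_indexFromOut (σ x)
    rw [hq] at h
    dsimp only
    rw [hq, ← iterate_succ_apply' t]
    refine iterate_eq_iterate_of_isPeriodicPt (σ.injective.mem_periodicPts _)
      (u (Quotient.mk _ x)).2 ?_
    rw [h, iterate_succ_apply', iterate_indexFromOut]⟩
  left_inv f := Subtype.ext <| funext fun x => by
    dsimp only
    rw [← f.2.iterate_right, iterate_indexFromOut]
  right_inv u := funext fun q => Subtype.ext <| by
    dsimp only
    have h := σ.iterate_indexFromOut q.out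
    rw [Quotient.out_eq] at h ⊢
    exact iterate_eq_iterate_of_isPeriodicPt (b := 0) (σ.injective.mem_periodicPts _) (u q).2 h

end Orbits

variable {α : Type*} [Fintype α] [DecidableEq α] (σ : Perm α) {β : Type*} (t : β → β)

instance : Fintype σ.Orbits :=
  @Quotient.fintype _ _ _ (inferInstanceAs (DecidableRel σ.SameCycle))

instance : DecidableEq σ.Orbits :=
  @Quotient.decidableEq _ _ (inferInstanceAs (DecidableRel σ.SameCycle))

theorem card_filter_sameCycle (x : α) : #{y | σ.SameCycle x y} = minimalPeriod σ x := by
  classical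
  have h := MulAction.minimalPeriod_eq_card (a := σ) (b := x)
  rw [show (fun y => σ • y) = ⇑σ from rfl] at h
  rw [h, ← Fintype.card_subtype]
  refine Fintype.card_congr (Equiv.subtypeEquivRight fun y => ?_)
  rw [mem_orbit_iff, Subgroup.exists_zpowers]
  rfl

theorem SameCycle.minimalPeriod_eq {σ : Perm α} {x y : α} (h : σ.SameCycle x y) :
    minimalPeriod σ x = minimalPeriod σ y := by
  rw [← card_filter_sameCycle, ← card_filter_sameCycle]
  congr 1
  ext z
  simp only [mem_filter, mem_univ, true_and]
  exact ⟨h.symm.trans, h.trans⟩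

theorem card_support_cycleOf_eq_minimalPeriod {x : α} (hx : x ∈ σ.support) :
    #(σ.cycleOf x).support = minimalPeriod σ x := by
  rw [← card_filter_sameCycle]
  congr 1
  ext y
  rw [mem_support_cycleOf_iff]
  simp [hx]

theorem count_cycleType (j : ℕ) :
    σ.cycleType.count j = #{c ∈ σ.cycleFactorsFinset | #c.support = j} := by
  rw [cycleType_def, Multiset.count_map, Finset.card_def, Finset.filter_val]
  simp_rw [eq_comm (a := j)]
  rfl

theorem card_filter_minimalPeriod_eq_of_two_le {j : ℕ} (hj : 2 ≤ j) :
    #{x | minimalPeriod σ x = j} = j * σ.cycleType.count j := by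
  have hsupp : ∀ {x}, minimalPeriod σ x = j → x ∈ σ.support := fun {x} hx => by
    rw [mem_support]
    intro hfix
    rw [minimalPeriod_eq_one_iff_isFixedPt.mpr hfix] at hx
    omega
  -- each point of period `j ≥ 2` lies in the support of exactly one cycle factor, its `cycleOf`
  rw [count_cycleType, card_eq_sum_card_fiberwise (f := σ.cycleOf)
    (t := {c ∈ σ.cycleFactorsFinset | #c.support = j})]
  · rw [mul_comm, ← smul_eq_mul, ← sum_const]
    refine sum_congr rfl fun c hc => ?_
    rw [mem_filter] at hc
    refine (congrArg card ?_).trans hc.2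
    ext x
    simp only [mem_filter, mem_univ, true_and]
    constructor
    · rintro ⟨hx, rfl⟩
      exact mem_support_cycleOf_iff.mpr ⟨SameCycle.refl _ _, hsupp hx⟩
    · intro hx
      have hc' := cycle_is_cycleOf hx hc.1
      refine ⟨?_, hc'.symm⟩
      rw [← card_support_cycleOf_eq_minimalPeriod σ (mem_cycleFactorsFinset_support_le hc.1 hx),
        ← hc', hc.2]
  · intro x hx
    simp only [coe_filter, mem_univ, true_and, Set.mem_ofPred_eq] at hx ⊢
    rw [cycleOf_mem_cycleFactorsFinset_iff, card_support_cycleOf_eq_minimalPeriod σ (hsupp hx)]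
    exact ⟨hsupp hx, hx⟩

theorem card_filter_minimalPeriod_eq (j : ℕ) :
    #{x | minimalPeriod σ x = j} = j * σ.partition.parts.count j := by
  rw [parts_partition, Multiset.count_add, Multiset.count_replicate]
  rcases lt_trichotomy j 1 with hj | rfl | hj
  · obtain rfl : j = 0 := by omega
    simp only [zero_mul, card_eq_zero, filter_eq_empty_iff]
    exact fun x _ => (minimalPeriod_pos σ x).ne'
  · have h0 : σ.cycleType.count 1 = 0 :=
      Multiset.count_eq_zero.mpr fun h => by have := two_le_of_mem_cycleType h; omega
    simp only [h0, if_pos, one_mul, zero_add, minimalPeriod_eq_one_iff_isFixedPt]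
    rw [← card_compl]
    congr 1
    ext x
    simp only [mem_filter, mem_univ, true_and, mem_compl, mem_support, not_not]
    rfl
  · rw [if_neg (by omega), add_zero]
    exact card_filter_minimalPeriod_eq_of_two_le σ hj

theorem card_filter_minimalPeriod_eq_mul_card_orbits (j : ℕ) :
    #{x | minimalPeriod σ x = j} = j * #{q : σ.Orbits | minimalPeriod σ q.out = j} := by
  rw [card_eq_sum_card_fiberwise (f := Quotient.mk _)
    (t := {q : σ.Orbits | minimalPeriod σ q.out = j})]
  · rw [mul_comm, ← smul_eq_mul, ← sum_const]
    refine sum_congr rfl fun q hq => ?_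
    rw [mem_filter] at hq
    refine (congrArg card ?_).trans ((card_filter_sameCycle σ q.out).trans hq.2)
    ext x
    simp only [mem_filter, mem_univ, true_and, mk_eq_iff_sameCycle_out]
    exact ⟨And.right, fun h => ⟨h.minimalPeriod_eq.symm.trans hq.2, h⟩⟩
  · intro x hx
    simp only [coe_filter, mem_univ, true_and, Set.mem_ofPred_eq] at hx ⊢
    rw [← hx]
    exact ((mk_eq_iff_sameCycle_out σ).mp rfl).minimalPeriod_eq

theorem map_minimalPeriod_out_eq_parts :
    (univ : Finset σ.Orbits).val.map (fun q => minimalPeriod σ q.out) = σ.partition.parts := by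
  ext j
  rcases Nat.eq_zero_or_pos j with rfl | hj
  · rw [Multiset.count_eq_zero.mpr, Multiset.count_eq_zero.mpr]
    · exact fun h => Nat.lt_irrefl 0 (σ.partition.parts_pos h)
    · simp only [Multiset.mem_map, not_exists, not_and]
      exact fun q _ => (minimalPeriod_pos σ q.out).ne'
  refine Nat.eq_of_mul_eq_mul_left hj ?_
  rw [← card_filter_minimalPeriod_eq, card_filter_minimalPeriod_eq_mul_card_orbits,
    Multiset.count_map, ← Finset.filter_val, ← Finset.card_def]
  simp_rw [eq_comm (a := j)]

theorem card_filter_isPeriodicPt {k : ℕ} (hk : k ≠ 0) :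
    #{x | IsPeriodicPt σ k x} = ∑ j ∈ k.divisors, j * σ.partition.parts.count j := by
  simp_rw [isPeriodicPt_iff_minimalPeriod_dvd]
  rw [card_eq_sum_card_fiberwise (f := minimalPeriod σ) (t := k.divisors)]
  · refine sum_congr rfl fun j hj => ?_
    rw [← card_filter_minimalPeriod_eq, filter_filter]
    congr 1
    ext x
    simp only [mem_filter, mem_univ, true_and, and_iff_right_iff_imp]
    rintro rfl
    exact Nat.dvd_of_mem_divisors hj
  · intro x hx
    simp only [coe_filter, mem_univ, true_and, Set.mem_ofPred_eq] at hx
    simpa [hk] using hx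

theorem card_semiconj :
    Nat.card {f : α → β // Semiconj f σ t} =
      (σ.partition.parts.map fun k => Nat.card {y // IsPeriodicPt t k y}).prod := by
  rw [Nat.card_congr (semiconjEquiv σ t), Nat.card_pi, ← map_minimalPeriod_out_eq_parts,
    Multiset.map_map, Finset.prod_eq_multiset_prod]
  rfl

end Equiv.Perm

namespace FreeSemigroup

variable {α β : Type*}

def toList (w : FreeSemigroup α) : List α := w.head :: w.tail

theorem toList_mul (v w : FreeSemigroup α) : (v * w).toList = v.toList ++ w.toList := rfl

theorem toList_map (f : α → β) (w : FreeSemigroup α) : (map f w).toList = w.toList.map f := by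
  induction w using FreeSemigroup.recOnMul with
  | ih1 a => rfl
  | ih2 a w ha hw => rw [map_mul, toList_mul, toList_mul, ha, hw, List.map_append]

variable {m : ℕ}

def lengthEqEquivVector (hm : m ≠ 0) :
    {w : FreeSemigroup α // w.length = m} ≃ List.Vector α m where
  toFun w := ⟨w.1.toList, w.2⟩
  invFun v := ⟨⟨v.1.head (List.ne_nil_of_length_pos (by rw [v.2]; exact Nat.pos_of_ne_zero hm)),
    v.1.tail⟩, by simp only [length, List.length_tail, v.2]; omega⟩
  left_inv _ := rfl
  right_inv v := Subtype.ext (List.cons_head_tail _)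

def lengthEqEquivFun (hm : m ≠ 0) : {w : FreeSemigroup α // w.length = m} ≃ (Fin m → α) :=
  (lengthEqEquivVector hm).trans (Equiv.vectorEquivFin α m)

theorem lengthEqEquivFun_map (hm : m ≠ 0) (f : α → β) (w : FreeSemigroup α)
    (hw : w.length = m) :
    lengthEqEquivFun hm ⟨map f w, (length_map f w).trans hw⟩ =
      f ∘ lengthEqEquivFun hm ⟨w, hw⟩ := by
  funext i
  change List.Vector.get (lengthEqEquivVector hm ⟨map f w, _⟩) i =
    f (List.Vector.get (lengthEqEquivVector hm ⟨w, hw⟩) i)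
  rw [← List.Vector.get_map _ f]
  exact congrArg (List.Vector.get · i) (Subtype.ext (toList_map f w))

end FreeSemigroup

/-- The letter images `α → αᵐ` of an `m`-uniform endomorphism, with `Perm α` acting by
conjugation; a type synonym, so that this action does not clash with the pointwise one. -/
def UniformSubst (α : Type*) (m : ℕ) : Type _ := α → Fin m → α

/-- The number of elements of `UniformSubst α m` fixed by a permutation whose cycle type,
fixed points included, is `M`. -/
def numFixed (m : ℕ) (M : Multiset ℕ) : ℕ :=
  (M.map fun k => (∑ j ∈ k.divisors, j * M.count j) ^ m).prod

namespace UniformSubst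

variable {α : Type*} {m : ℕ}

instance [Finite α] : Finite (UniformSubst α m) := inferInstanceAs (Finite (α → Fin m → α))

instance : MulAction (Equiv.Perm α) (UniformSubst α m) where
  smul e f a := e ∘ f (e⁻¹ a)
  one_smul _ := rfl
  mul_smul _ _ _ := rfl

theorem smul_eq_iff {e : Equiv.Perm α} {f f' : UniformSubst α m} :
    e • f = f' ↔ ∀ a, f' (e a) = e ∘ f a := by
  refine funext_iff.trans ⟨fun h a => ?_, fun h a => ?_⟩
  · rw [← h (e a)]
    change e ∘ f (e⁻¹ (e a)) = _
    simp
  · change e ∘ f (e⁻¹ a) = f' a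
    simp [← h]

theorem mem_fixedBy_iff {e : Equiv.Perm α} {f : UniformSubst α m} :
    f ∈ fixedBy (UniformSubst α m) e ↔ Semiconj f e (e ∘ ·) :=
  smul_eq_iff

variable [Fintype α] [DecidableEq α]

theorem card_fixedBy (e : Equiv.Perm α) :
    Nat.card (fixedBy (UniformSubst α m) e) = numFixed m e.partition.parts := by
  have hfix :
      fixedBy (UniformSubst α m) e ≃ {f : α → Fin m → α // Semiconj f e (e ∘ ·)} :=
    (Equiv.refl _).subtypeEquiv fun _ => mem_fixedBy_iff
  rw [Nat.card_congr hfix, e.card_semiconj]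
  refine congrArg _ (Multiset.map_congr rfl fun k hk => ?_)
  rw [Nat.card_congr (Equiv.subtypeEquivRight fun _ => isPeriodicPt_comp_left_iff),
    Nat.card_congr Equiv.subtypePiEquivPi, Nat.card_fun, Nat.card_eq_fintype_card,
    Fintype.card_subtype, e.card_filter_isPeriodicPt (e.partition.parts_pos hk).ne',
    Nat.card_eq_fintype_card, Fintype.card_fin]

theorem card_orbits_mul_factorial :
    Nat.card (orbitRel.Quotient (Equiv.Perm α) (UniformSubst α m)) * (Fintype.card α).factorial =
      ∑ e : Equiv.Perm α, numFixed m e.partition.parts := by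
  rw [← Fintype.card_perm, ← Nat.card_eq_fintype_card,
    ← sum_natCard_fixedBy_eq_natCard_orbits_mul_natCard_group]
  exact sum_congr rfl fun e _ => card_fixedBy e

end UniformSubst

namespace FreeSemigroup

variable {α : Type*} {m : ℕ}

def uniformEndEquiv (hm : m ≠ 0) :
    {φ : FreeSemigroup α →ₙ* FreeSemigroup α // ∀ a, (φ (of a)).length = m} ≃
      UniformSubst α m :=
  (lift.symm.subtypeEquiv fun _ => Iff.rfl).trans <|
    Equiv.subtypePiEquivPi.trans (Equiv.piCongrRight fun _ => lengthEqEquivFun hm)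

theorem comp_map_eq_iff_smul_eq (hm : m ≠ 0)
    (φ ψ : {φ : FreeSemigroup α →ₙ* FreeSemigroup α // ∀ a, (φ (of a)).length = m})
    (e : Equiv.Perm α) :
    ψ.1.comp (map e) = (map e).comp φ.1 ↔
      e • uniformEndEquiv hm φ = uniformEndEquiv hm ψ := by
  rw [UniformSubst.smul_eq_iff]
  change _ ↔ ∀ a, lengthEqEquivFun hm ⟨ψ.1 (of (e a)), _⟩ =
    e ∘ lengthEqEquivFun hm ⟨φ.1 (of a), _⟩
  simp only [← lengthEqEquivFun_map hm e _ (φ.2 _), (lengthEqEquivFun hm).apply_eq_iff_eq,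
    Subtype.ext_iff]
  exact ⟨fun h a => DFunLike.congr_fun h (of a), fun h => hom_ext (funext h)⟩

theorem card_quot_comp_map_eq (hm : m ≠ 0) :
    Nat.card (Quot fun φ ψ : {φ : FreeSemigroup α →ₙ* FreeSemigroup α //
        ∀ a, (φ (of a)).length = m} =>
          ∃ e : Equiv.Perm α, ψ.1.comp (map e) = (map e).comp φ.1) =
      Nat.card (orbitRel.Quotient (Equiv.Perm α) (UniformSubst α m)) :=
  Nat.card_congr <| quotEquivOrbitRelQuotient (uniformEndEquiv hm) fun φ ψ =>
    exists_congr fun e => comp_map_eq_iff_smul_eq hm φ ψ e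

end FreeSemigroup

theorem fullCycleType_eq_partition_parts {D : Type*} [Fintype D] [DecidableEq D]
    (g : Equiv.Perm D) : fullCycleType g = g.partition.parts :=
  rfl

theorem number_of_m_uniform_endomorphisms_via_partitions_general
    {D : Type*} [Fintype D] [DecidableEq D] {n m : ℕ} (hm : 1 ≤ m)
    (hcard : Fintype.card D = n)
    (g : Fin (Fintype.card (Nat.Partition n)) → Equiv.Perm D)
    (hdistinct : ∀ r s, r ≠ s → fullCycleType (g r) ≠ fullCycleType (g s))
    (hall : ∀ h : Equiv.Perm D, ∃ r, fullCycleType h = fullCycleType (g r)) :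
    (Nat.card (Quot (fun φ ψ : {φ : FreeSemigroup D →ₙ* FreeSemigroup D //
          ∀ d : D, (φ (FreeSemigroup.of d)).length = m} =>
        ∃ e : Equiv.Perm D,
          (ψ : FreeSemigroup D →ₙ* FreeSemigroup D).comp (FreeSemigroup.map ⇑e)
            = (FreeSemigroup.map ⇑e).comp
                (φ : FreeSemigroup D →ₙ* FreeSemigroup D))) : ℚ)
      = (1 / (n.factorial : ℚ)) * ∑ r : Fin (Fintype.card (Nat.Partition n)),
          ((Nat.card {h : Equiv.Perm D // fullCycleType h = fullCycleType (g r)} : ℚ) *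
            ((((fullCycleType (g r)).map (fun ki =>
              (∑ j ∈ ki.divisors, j * cycleCount (g r) j) ^ m)).prod : ℕ) : ℚ)) := by
  subst hcard
  rw [FreeSemigroup.card_quot_comp_map_eq (by omega)]
  have hburnside := UniformSubst.card_orbits_mul_factorial (α := D) (m := m)
  simp only [fullCycleType_eq_partition_parts, cycleCount] at hdistinct hall ⊢
  rw [Fintype.sum_comp_eq_sum_card_fiber_of_reps (fun e : Equiv.Perm D => e.partition.parts) g
    (fun r s h => by_contra fun hrs => hdistinct r s hrs h) hall
    (numFixed m)] at hburnside
  simp only [numFixed, Nat.card_eq_fintype_card, Fintype.card_subtype, smul_eq_mul]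
    at hburnside ⊢
  field_simp
  exact_mod_cast hburnside

/-- **Corollary 1.** Let `|D| = n ≥ 1`, let `p(n)` be the number of integer partitions of `n`,
and let `g_1, …, g_{p(n)} ∈ Sym(D)` have pairwise distinct cycle types, realizing all cycle
types.  Writing `C_{g_r}` for the set of permutations with the same cycle type as `g_r`, the
number of `m`-uniform endomorphisms on `D⁺` up to combinatorial equivalence is
`(1/n!) · Σ_{r=1}^{p(n)} |C_{g_r}| · ∏_{cycle lengths kᵢ of g_r}
  (Σ_{j ∣ kᵢ} j·c(g_r,j))^m`. -/
theorem number_of_m_uniform_endomorphisms_via_partitions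
    {D : Type*} [Fintype D] [DecidableEq D] {n m : ℕ} (hn : 1 ≤ n) (hm : 1 ≤ m)
    (hcard : Fintype.card D = n)
    (g : Fin (Fintype.card (Nat.Partition n)) → Equiv.Perm D)
    (hdistinct : ∀ r s, r ≠ s → fullCycleType (g r) ≠ fullCycleType (g s))
    (hall : ∀ h : Equiv.Perm D, ∃ r, fullCycleType h = fullCycleType (g r)) :
    (Nat.card (Quot (fun φ ψ : {φ : FreeSemigroup D →ₙ* FreeSemigroup D //
          ∀ d : D, (φ (FreeSemigroup.of d)).length = m} =>
        ∃ e : Equiv.Perm D,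
          (ψ : FreeSemigroup D →ₙ* FreeSemigroup D).comp (FreeSemigroup.map ⇑e)
            = (FreeSemigroup.map ⇑e).comp
                (φ : FreeSemigroup D →ₙ* FreeSemigroup D))) : ℚ)
      = (1 / (n.factorial : ℚ)) * ∑ r : Fin (Fintype.card (Nat.Partition n)),
          ((Nat.card {h : Equiv.Perm D // fullCycleType h = fullCycleType (g r)} : ℚ) *
            ((((fullCycleType (g r)).map (fun ki =>
              (∑ j ∈ ki.divisors, j * cycleCount (g r) j) ^ m)).prod : ℕ) : ℚ)) :=
  number_of_m_uniform_endomorphisms_via_partitions_general hm hcard g hdistinct hall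
end

section
/- Let D be a set with |D| = 2 and let m ≥ 1. Then the number of m-endomorphisms on D⁺, up to combinatorial equivalence, equals (1/2)·((2^{m+1} − 2)² + (2^{m+1} − 2)). -/
open FreeSemigroup

/-- The cons equivalence. -/
def listLeEquiv (α : Type*) (n : ℕ) :
    {l : List α // l.length ≤ n + 1} ≃ Option (α × {l : List α // l.length ≤ n}) where
  toFun l := match l with
    | ⟨[], _⟩ => none
    | ⟨a :: l, h⟩ => some (a, ⟨l, by simpa using h⟩)
  invFun o := match o with
    | none => ⟨[], by simp⟩
    | some (a, l) => ⟨a :: l.1, by simpa using l.2⟩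
  left_inv l := by rcases l with ⟨_ | ⟨a, l⟩, h⟩ <;> rfl
  right_inv o := by rcases o with _ | ⟨a, l⟩ <;> rfl

lemma card_list_le (α : Type*) [Finite α] (h2 : Nat.card α = 2) (n : ℕ) :
    Nat.card {l : List α // l.length ≤ n} = 2 ^ (n + 1) - 1 := by
  induction n with
  | zero =>
    have : {l : List α // l.length ≤ 0} ≃ PUnit.{1} :=
      { toFun := fun _ => PUnit.unit
        invFun := fun _ => ⟨[], by simp⟩
        left_inv := fun ⟨l, h⟩ => by
          simp only [Nat.le_zero, List.length_eq_zero_iff] at h; subst h; rfl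
        right_inv := fun _ => rfl }
    simp [Nat.card_congr this]
  | succ n ih =>
    have : Finite {l : List α // l.length ≤ n} :=
      (List.finite_length_le (α := α) (n := n)).to_subtype
    rw [Nat.card_congr (listLeEquiv α n), Finite.card_option, Nat.card_prod, h2, ih]
    have : 1 ≤ 2 ^ (n + 1) := Nat.one_le_two_pow
    omega


section aux
variable {D : Type*} [DecidableEq D] {m : ℕ} {a b : D}

/-- words of length ≤ m decompose as head × short tail -/
def wordEquiv (D : Type*) (m : ℕ) (hm : 1 ≤ m) :
    {w : FreeSemigroup D // w.length ≤ m} ≃ D × {l : List D // l.length ≤ m - 1} where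
  toFun w := (w.1.head, ⟨w.1.tail, by
    have h : w.1.tail.length + 1 ≤ m := w.2
    omega⟩)
  invFun p := ⟨⟨p.1, p.2.1⟩, by
    have h : p.2.1.length ≤ m - 1 := p.2.2
    show p.2.1.length + 1 ≤ m
    omega⟩
  left_inv w := rfl
  right_inv p := rfl

lemma map_swap_invol (w : FreeSemigroup D) :
    map ⇑(Equiv.swap a b) (map ⇑(Equiv.swap a b) w) = w := by
  have : (map ⇑(Equiv.swap a b)).comp (map ⇑(Equiv.swap a b))
      = MulHom.id (FreeSemigroup D) := by
    apply FreeSemigroup.hom_ext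
    funext d
    simp [Equiv.swap_apply_self]
  exact DFunLike.congr_fun this w

/-- the twisted equivalence -/
def endoEquiv (m : ℕ) (a b : D) (hab : a ≠ b) (hall : ∀ d : D, d = a ∨ d = b) :
    {φ : FreeSemigroup D →ₙ* FreeSemigroup D //
        ∀ d : D, (φ (FreeSemigroup.of d)).length ≤ m} ≃
      ({w : FreeSemigroup D // w.length ≤ m} × {w : FreeSemigroup D // w.length ≤ m}) where
  toFun φ := (⟨φ.1 (of a), φ.2 a⟩,
    ⟨map ⇑(Equiv.swap a b) (φ.1 (of b)), by rw [length_map]; exact φ.2 b⟩)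
  invFun p := ⟨FreeSemigroup.lift
      (fun d => if d = a then p.1.1 else map ⇑(Equiv.swap a b) p.2.1), by
    intro d
    rw [lift_of]
    split
    · exact p.1.2
    · rw [length_map]; exact p.2.2⟩
  left_inv φ := by
    apply Subtype.ext
    apply FreeSemigroup.hom_ext
    funext d
    show FreeSemigroup.lift _ (of d) = φ.1 (of d)
    rw [lift_of]
    split
    · rename_i h; subst h; rfl
    · rename_i h
      rcases hall d with h' | h'
      · exact absurd h' h
      · subst h'
        exact map_swap_invol _
  right_inv p := by
    apply Prod.ext
    · apply Subtype.ext
      show FreeSemigroup.lift _ (of a) = p.1.1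
      rw [lift_of, if_pos rfl]
    · apply Subtype.ext
      show map _ (FreeSemigroup.lift _ (of b)) = p.2.1
      rw [lift_of, if_neg hab.symm, map_swap_invol]

end aux

section aux2
variable {D : Type*} [DecidableEq D] {m : ℕ} {a b : D}

lemma perm_classify (hab : a ≠ b) (hall : ∀ d : D, d = a ∨ d = b) (g : Equiv.Perm D) :
    g = 1 ∨ g = Equiv.swap a b := by
  rcases hall (g a) with h1 | h1
  · left
    apply Equiv.ext
    intro d
    rcases hall d with h | h <;> rw [h]
    · simpa using h1
    · rcases hall (g b) with h2 | h2
      · exact absurd (g.injective (h2.trans h1.symm)) hab.symm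
      · simpa using h2
  · right
    apply Equiv.ext
    intro d
    rcases hall d with h | h <;> rw [h]
    · simpa [Equiv.swap_apply_left] using h1
    · rcases hall (g b) with h2 | h2
      · simpa [Equiv.swap_apply_right] using h2
      · exact absurd (g.injective (h1.trans h2.symm)) hab

lemma map_one_eq : map (⇑(1 : Equiv.Perm D)) = MulHom.id (FreeSemigroup D) := by
  apply FreeSemigroup.hom_ext
  funext d
  simp

lemma rel_iff (hab : a ≠ b) (hall : ∀ d : D, d = a ∨ d = b)
    (φ ψ : {φ : FreeSemigroup D →ₙ* FreeSemigroup D //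
        ∀ d : D, (φ (FreeSemigroup.of d)).length ≤ m}) :
    (∃ g : Equiv.Perm D,
        (ψ : FreeSemigroup D →ₙ* FreeSemigroup D).comp (FreeSemigroup.map ⇑g)
          = (FreeSemigroup.map ⇑g).comp (φ : FreeSemigroup D →ₙ* FreeSemigroup D)) ↔
      Sym2.Rel _ (endoEquiv m a b hab hall φ) (endoEquiv m a b hab hall ψ) := by
  constructor
  · rintro ⟨g, hg⟩
    rcases perm_classify hab hall g with rfl | rfl
    · rw [Sym2.rel_iff']
      left
      rw [map_one_eq] at hg
      simp only [MulHom.comp_id, MulHom.id_comp] at hg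
      have : φ = ψ := Subtype.ext hg.symm
      rw [this]
    · rw [Sym2.rel_iff']
      right
      have ha := DFunLike.congr_fun hg (of a)
      have hb := DFunLike.congr_fun hg (of b)
      simp only [MulHom.comp_apply, map_of, Equiv.swap_apply_left,
        Equiv.swap_apply_right] at ha hb
      -- ha : ψ (of b) = map σ (φ (of a)), hb : ψ (of a) = map σ (φ (of b))
      apply Prod.ext
      · apply Subtype.ext
        show φ.1 (of a) = map ⇑(Equiv.swap a b) (ψ.1 (of b))
        rw [ha, map_swap_invol]
      · apply Subtype.ext
        show map ⇑(Equiv.swap a b) (φ.1 (of b)) = ψ.1 (of a)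
        rw [hb]
  · rw [Sym2.rel_iff']
    rintro (h | h)
    · refine ⟨1, ?_⟩
      rw [map_one_eq]
      have : φ = ψ := (endoEquiv m a b hab hall).injective h
      rw [this]
      simp
    · refine ⟨Equiv.swap a b, ?_⟩
      have h1 : φ.1 (of a) = map ⇑(Equiv.swap a b) (ψ.1 (of b)) :=
        congrArg Subtype.val (congrArg Prod.fst h)
      have h2 : map ⇑(Equiv.swap a b) (φ.1 (of b)) = ψ.1 (of a) :=
        congrArg Subtype.val (congrArg Prod.snd h)
      apply FreeSemigroup.hom_ext
      funext d
      show ψ.1 (map _ (of d)) = map _ (φ.1 (of d))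
      rcases hall d with rfl | rfl
      · rw [map_of, Equiv.swap_apply_left, h1, map_swap_invol]
      · rw [map_of, Equiv.swap_apply_right, ← h2]

end aux2




/-- If `|D| = 2` and `m ≥ 1`, the number of `m`-endomorphisms on the free semigroup `D⁺`,
up to combinatorial equivalence, is `(1/2)·((2^{m+1} − 2)² + (2^{m+1} − 2))`. -/
theorem number_of_classes_of_m_endomorphisms_card_two
    {D : Type*} [Fintype D] {m : ℕ} (hm : 1 ≤ m) (hcard : Fintype.card D = 2) :
    (Nat.card (Quot (fun φ ψ : {φ : FreeSemigroup D →ₙ* FreeSemigroup D //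
          ∀ d : D, (φ (FreeSemigroup.of d)).length ≤ m} =>
        ∃ g : Equiv.Perm D,
          (ψ : FreeSemigroup D →ₙ* FreeSemigroup D).comp (FreeSemigroup.map ⇑g)
            = (FreeSemigroup.map ⇑g).comp
                (φ : FreeSemigroup D →ₙ* FreeSemigroup D))) : ℚ)
      = (1 / 2) * (((2 : ℚ) ^ (m + 1) - 2) ^ 2 + ((2 : ℚ) ^ (m + 1) - 2)) := by
  letI : DecidableEq D := Classical.decEq D
  have hcard' : Nat.card D = 2 := by rw [Nat.card_eq_fintype_card, hcard]
  obtain ⟨a, b, hab, hU⟩ := Nat.card_eq_two_iff.mp hcard'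
  have hall : ∀ d : D, d = a ∨ d = b := by
    intro d
    have hd : d ∈ ({a, b} : Set D) := hU ▸ Set.mem_univ d
    simpa using hd
  haveI : Finite {l : List D // l.length ≤ m - 1} :=
    (List.finite_length_le (α := D) (n := m - 1)).to_subtype
  haveI finW : Finite {w : FreeSemigroup D // w.length ≤ m} :=
    Finite.of_equiv _ (wordEquiv D m hm).symm
  have hcW : Nat.card {w : FreeSemigroup D // w.length ≤ m} = 2 ^ (m + 1) - 2 := by
    rw [Nat.card_congr (wordEquiv D m hm), Nat.card_prod,
      card_list_le D (by rw [Nat.card_eq_fintype_card, hcard]) (m - 1),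
      Nat.card_eq_fintype_card, hcard]
    have hm1 : m - 1 + 1 = m := by omega
    rw [hm1]
    have h1 : 1 ≤ 2 ^ m := Nat.one_le_two_pow
    rw [pow_succ]
    omega
  have key : Nat.card (Quot (fun φ ψ : {φ : FreeSemigroup D →ₙ* FreeSemigroup D //
          ∀ d : D, (φ (FreeSemigroup.of d)).length ≤ m} =>
        ∃ g : Equiv.Perm D,
          (ψ : FreeSemigroup D →ₙ* FreeSemigroup D).comp (FreeSemigroup.map ⇑g)
            = (FreeSemigroup.map ⇑g).comp
                (φ : FreeSemigroup D →ₙ* FreeSemigroup D)))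
      = Nat.card (Sym2 {w : FreeSemigroup D // w.length ≤ m}) :=
    Nat.card_congr (Quot.congr (endoEquiv m a b hab hall) (rel_iff hab hall))
  rw [key]
  letI : DecidableEq {w : FreeSemigroup D // w.length ≤ m} := Classical.decEq _
  letI : Fintype {w : FreeSemigroup D // w.length ≤ m} := Fintype.ofFinite _
  rw [Nat.card_eq_fintype_card] at hcW ⊢
  rw [Sym2.card, Nat.choose_two_right, hcW]
  have h2le : (2 : ℕ) ≤ 2 ^ (m + 1) := by
    have h1 : 1 ≤ 2 ^ m := Nat.one_le_two_pow
    rw [pow_succ]; omega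
  set N : ℕ := 2 ^ (m + 1) - 2 with hN
  have hdvd : 2 ∣ (N + 1) * (N + 1 - 1) := by
    rw [Nat.add_sub_cancel, mul_comm]
    exact (Nat.even_mul_succ_self N).two_dvd
  rw [Nat.cast_div hdvd (by norm_num)]
  have hNcast : ((N : ℚ)) = 2 ^ (m + 1) - 2 := by
    rw [hN, Nat.cast_sub h2le, Nat.cast_pow, Nat.cast_ofNat]
  push_cast
  rw [hNcast]
  ring
end
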